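/- Let σ > 0, let S ∈ ℂ^{N_t×N_t} and F ∈ ℂ^{N_sb×N_sb} be unitary matrices, let E ∈ ℂ^{N_t×N_sb}, and let W = S E Fᴴ. Let 𝒮 ⊆ {1,…,N_t} and ℱ ⊆ {1,…,N_sb} be support sets such that E(v,l) = 0 whenever exactly one of the conditions v ∈ 𝒮, l ∈ ℱ holds, and |E(v,l)| ≤ σ whenever v ∉ 𝒮 and l ∉ ℱ. Let E' be the masked coefficient matrix with E'(v,l) = E(v,l) for (v,l) ∈ 𝒮×ℱ and E'(v,l) = 0 otherwise, and let Ŵ = S E' Fᴴ. Assume every column of W has unit ℓ₂ norm and every column of Ŵ is nonzero with ℓ₂ norm at most 1. Then 1 − (1/N_sb) Σ_{l=1}^{N_sb} |W(:,l)ᴴ Ŵ(:,l)| / (‖W(:,l)‖₂ ‖Ŵ(:,l)‖₂) ≤ (1/N_sb)·(N_t − |𝒮|)·(N_sb − |ℱ|)·σ². -/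

import Mathlib

open Matrix BigOperators

/-- Euclidean (ℓ₂) norm of the `l`-th column of a complex matrix. -/
noncomputable def colNorm {Nt Nsb : ℕ} (W : Matrix (Fin Nt) (Fin Nsb) ℂ) (l : Fin Nsb) : ℝ :=
  Real.sqrt (∑ v, Complex.normSq (W v l))

/-- Hermitian inner product `W(:,l)ᴴ W'(:,l)` of the `l`-th columns. -/
noncomputable def colInner {Nt Nsb : ℕ} (W W' : Matrix (Fin Nt) (Fin Nsb) ℂ) (l : Fin Nsb) : ℂ :=
  ∑ v, (starRingEnd ℂ) (W v l) * (W' v l)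

/-!
Column by column, for a unit vector `u` and a nonzero vector `w` one has
`1 - |⟪u, w⟫| / ‖w‖ ≤ 1 + ‖w‖² - 2 |⟪u, w⟫| ≤ ‖u - w‖²`. Summing over the columns bounds the
left-hand side by `N_sb⁻¹ ‖W - Ŵ‖_F²`, and since `W - Ŵ = S (E - E') Fᴴ` with `S`, `F` unitary this
equals `N_sb⁻¹ ‖E - E'‖_F²`. The residual `E - E'` is `E` restricted to `𝒮ᶜ × ℱᶜ`, whose entries
are bounded by `σ`.
-/

open WithLp

section InnerProductSpace

variable {𝕜 E : Type*} [RCLike 𝕜] [NormedAddCommGroup E] [InnerProductSpace 𝕜 E]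

theorem one_sub_norm_inner_div_norm_le_norm_sub_sq {u w : E} (hu : ‖u‖ = 1) (hw : w ≠ 0) :
    1 - ‖inner 𝕜 u w‖ / ‖w‖ ≤ ‖u - w‖ ^ 2 := by
  have hw₀ : 0 < ‖w‖ := norm_pos_iff.2 hw
  have hcs : ‖inner 𝕜 u w‖ ≤ ‖w‖ := by simpa [hu] using norm_inner_le_norm (𝕜 := 𝕜) u w
  have hre : RCLike.re (inner 𝕜 u w) ≤ ‖inner 𝕜 u w‖ := RCLike.re_le_norm _
  -- with `a = ‖w‖`, `c = ‖⟪u, w⟫‖`: `c - (2c - a²) a = c (1 - a)² + a² (a - c) ≥ 0`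
  have hdiv : 2 * ‖inner 𝕜 u w‖ - ‖w‖ ^ 2 ≤ ‖inner 𝕜 u w‖ / ‖w‖ := by
    rw [le_div_iff₀ hw₀]
    nlinarith [mul_nonneg (norm_nonneg (inner 𝕜 u w)) (sq_nonneg (1 - ‖w‖)),
      mul_nonneg (sq_nonneg ‖w‖) (sub_nonneg.2 hcs)]
  rw [norm_sub_sq (𝕜 := 𝕜), hu]
  linarith

end InnerProductSpace

section Frobenius

variable {m n 𝕜 : Type*} [Fintype m] [Fintype n] [RCLike 𝕜]

theorem Matrix.trace_conjTranspose_mul_self_eq_sum_norm_sq (A : Matrix m n 𝕜) :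
    (Aᴴ * A).trace = ((∑ l, ∑ v, ‖A v l‖ ^ 2 : ℝ) : 𝕜) := by
  push_cast
  simp [trace, mul_apply, RCLike.conj_mul]

theorem Matrix.sum_norm_sq_mul_mul_conjTranspose [DecidableEq m] [DecidableEq n]
    {S : Matrix m m 𝕜} {F : Matrix n n 𝕜}
    (hS : Sᴴ * S = 1) (hF : Fᴴ * F = 1) (D : Matrix m n 𝕜) :
    ∑ l, ∑ v, ‖(S * D * Fᴴ) v l‖ ^ 2 = ∑ l, ∑ v, ‖D v l‖ ^ 2 := by
  apply RCLike.ofReal_injective (K := 𝕜)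
  rw [← trace_conjTranspose_mul_self_eq_sum_norm_sq, ← trace_conjTranspose_mul_self_eq_sum_norm_sq]
  calc ((S * D * Fᴴ)ᴴ * (S * D * Fᴴ)).trace = (F * (Dᴴ * (Sᴴ * S) * D * Fᴴ)).trace := by
        simp only [conjTranspose_mul, conjTranspose_conjTranspose, Matrix.mul_assoc]
    _ = (Dᴴ * D).trace := by
        rw [trace_mul_comm, hS, Matrix.mul_one, Matrix.mul_assoc, hF, Matrix.mul_one]

theorem Matrix.sum_norm_sq_le_of_support {D : Matrix m n 𝕜} {s : Finset m} {t : Finset n} {σ : ℝ}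
    (hD₀ : ∀ v l, (v ∉ s ∨ l ∉ t) → D v l = 0) (hDσ : ∀ v ∈ s, ∀ l ∈ t, ‖D v l‖ ≤ σ) :
    ∑ l, ∑ v, ‖D v l‖ ^ 2 ≤ s.card * t.card * σ ^ 2 := by
  have hsupp : ∑ l, ∑ v, ‖D v l‖ ^ 2 = ∑ l ∈ t, ∑ v ∈ s, ‖D v l‖ ^ 2 := by
    rw [← Finset.sum_subset (Finset.subset_univ t) fun l _ hl => ?_]
    · exact Finset.sum_congr rfl fun l _ => (Finset.sum_subset (Finset.subset_univ s)
        fun v _ hv => by simp [hD₀ v l (Or.inl hv)]).symm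
    · exact Finset.sum_eq_zero fun v _ => by simp [hD₀ v l (Or.inr hl)]
  calc ∑ l, ∑ v, ‖D v l‖ ^ 2 ≤ ∑ _l ∈ t, ∑ _v ∈ s, σ ^ 2 := by
        rw [hsupp]
        gcongr with l hl v hv
        exact hDσ v hv l hl
    _ = s.card * t.card * σ ^ 2 := by simp only [Finset.sum_const, nsmul_eq_mul]; ring

end Frobenius

theorem Finset.cast_card_compl {α R : Type*} [Fintype α] [DecidableEq α] [AddGroupWithOne R]
    (s : Finset α) : ((sᶜ.card : ℕ) : R) = Fintype.card α - s.card := by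
  rw [Finset.card_compl, Nat.cast_sub (Finset.card_le_univ s)]

theorem colNorm_eq_norm {Nt Nsb : ℕ} (A : Matrix (Fin Nt) (Fin Nsb) ℂ) (l : Fin Nsb) :
    colNorm A l = ‖toLp 2 (Aᵀ l)‖ := by
  simp [colNorm, EuclideanSpace.norm_eq, Complex.sq_norm]

theorem colInner_eq_inner {Nt Nsb : ℕ} (A B : Matrix (Fin Nt) (Fin Nsb) ℂ) (l : Fin Nsb) :
    colInner A B l = inner ℂ (toLp 2 (Aᵀ l)) (toLp 2 (Bᵀ l)) := by
  simp [colInner, PiLp.inner_apply, mul_comm]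

theorem one_sub_colInner_div_le_sum_norm_sub_sq {Nt Nsb : ℕ} {A B : Matrix (Fin Nt) (Fin Nsb) ℂ}
    {l : Fin Nsb} (hA : colNorm A l = 1) (hB : colNorm B l ≠ 0) :
    1 - ‖colInner A B l‖ / (colNorm A l * colNorm B l) ≤ ∑ v, ‖(A - B) v l‖ ^ 2 := by
  have hsub : ∑ v, ‖(A - B) v l‖ ^ 2 = ‖toLp 2 (Aᵀ l) - toLp 2 (Bᵀ l)‖ ^ 2 := by
    simp [EuclideanSpace.norm_sq_eq]
  rw [colNorm_eq_norm] at hA hB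
  rw [colNorm_eq_norm, colNorm_eq_norm, colInner_eq_inner, hA, one_mul, hsub]
  exact one_sub_norm_inner_div_norm_le_norm_sub_sq hA (norm_ne_zero_iff.1 hB)

theorem masked_residual_apply {m n α : Type*} [DecidableEq m] [DecidableEq n] [AddGroup α]
    {E E' : Matrix m n α} {s : Finset m} {t : Finset n}
    (hE₀ : ∀ v l, ((v ∈ s ∧ l ∉ t) ∨ (v ∉ s ∧ l ∈ t)) → E v l = 0)
    (hE' : ∀ v l, E' v l = if v ∈ s ∧ l ∈ t then E v l else 0) (v : m) (l : n) :
    (E - E') v l = if v ∉ s ∧ l ∉ t then E v l else 0 := by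
  by_cases hv : v ∈ s <;> by_cases hl : l ∈ t <;> simp [hE', hv, hl, hE₀ v l]

theorem sum_norm_sq_sub_masked_le {m n 𝕜 : Type*} [Fintype m] [Fintype n] [DecidableEq m]
    [DecidableEq n] [RCLike 𝕜] {E E' : Matrix m n 𝕜} {s : Finset m} {t : Finset n} {σ : ℝ}
    (hE₀ : ∀ v l, ((v ∈ s ∧ l ∉ t) ∨ (v ∉ s ∧ l ∈ t)) → E v l = 0)
    (hEσ : ∀ v l, v ∉ s → l ∉ t → ‖E v l‖ ≤ σ)
    (hE' : ∀ v l, E' v l = if v ∈ s ∧ l ∈ t then E v l else 0) :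
    ∑ l, ∑ v, ‖(E - E') v l‖ ^ 2 ≤ sᶜ.card * tᶜ.card * σ ^ 2 := by
  have hD := masked_residual_apply hE₀ hE'
  refine sum_norm_sq_le_of_support (fun v l hvl => ?_) fun v hv l hl => ?_
  · simp only [Finset.mem_compl, not_not] at hvl
    rw [hD, if_neg (by tauto)]
  · rw [Finset.mem_compl] at hv hl
    rw [hD, if_pos ⟨hv, hl⟩]
    exact hEσ v l hv hl

theorem dominant_approximation_step_b_general
    {Nt Nsb : ℕ} (hNsb : 0 < Nsb)
    (σ : ℝ)
    (S : Matrix (Fin Nt) (Fin Nt) ℂ) (F : Matrix (Fin Nsb) (Fin Nsb) ℂ)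
    (hS : Sᴴ * S = 1 ∧ S * Sᴴ = 1) (hF : Fᴴ * F = 1 ∧ F * Fᴴ = 1)
    (E : Matrix (Fin Nt) (Fin Nsb) ℂ)
    (W : Matrix (Fin Nt) (Fin Nsb) ℂ) (hW : W = S * E * Fᴴ)
    (𝒮 : Finset (Fin Nt)) (ℱ : Finset (Fin Nsb))
    (hE0 : ∀ v l, ((v ∈ 𝒮 ∧ l ∉ ℱ) ∨ (v ∉ 𝒮 ∧ l ∈ ℱ)) → E v l = 0)
    (hEσ : ∀ v l, v ∉ 𝒮 → l ∉ ℱ → ‖E v l‖ ≤ σ)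
    (E' : Matrix (Fin Nt) (Fin Nsb) ℂ)
    (hE' : ∀ v l, E' v l = if v ∈ 𝒮 ∧ l ∈ ℱ then E v l else 0)
    (What : Matrix (Fin Nt) (Fin Nsb) ℂ) (hWhat : What = S * E' * Fᴴ)
    (hWcol : ∀ l, colNorm W l = 1)
    (hWhatcol : ∀ l, colNorm What l ≠ 0 ∧ colNorm What l ≤ 1) :
    1 - (1 / (Nsb : ℝ)) *
        ∑ l, ‖colInner W What l‖ / (colNorm W l * colNorm What l) ≤
      (1 / (Nsb : ℝ)) * ((Nt : ℝ) - 𝒮.card) * ((Nsb : ℝ) - ℱ.card) * σ ^ 2 := by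
  set ρ : Fin Nsb → ℝ := fun l => ‖colInner W What l‖ / (colNorm W l * colNorm What l)
  have hsum : (Nsb : ℝ) - ∑ l, ρ l ≤ 𝒮ᶜ.card * ℱᶜ.card * σ ^ 2 :=
    calc (Nsb : ℝ) - ∑ l, ρ l = ∑ l, (1 - ρ l) := by simp [Finset.sum_sub_distrib]
      _ ≤ ∑ l, ∑ v, ‖(W - What) v l‖ ^ 2 := Finset.sum_le_sum fun l _ =>
          one_sub_colInner_div_le_sum_norm_sub_sq (hWcol l) (hWhatcol l).1
      _ = ∑ l, ∑ v, ‖(E - E') v l‖ ^ 2 := by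
          rw [hW, hWhat, ← Matrix.sub_mul, ← Matrix.mul_sub]
          exact sum_norm_sq_mul_mul_conjTranspose hS.1 hF.1 _
      _ ≤ _ := sum_norm_sq_sub_masked_le hE0 hEσ hE'
  rw [Finset.cast_card_compl, Finset.cast_card_compl, Fintype.card_fin, Fintype.card_fin] at hsum
  have hN : (Nsb : ℝ) ≠ 0 := Nat.cast_ne_zero.2 hNsb.ne'
  calc 1 - 1 / (Nsb : ℝ) * ∑ l, ρ l = 1 / (Nsb : ℝ) * ((Nsb : ℝ) - ∑ l, ρ l) := by field_simp
    _ ≤ 1 / (Nsb : ℝ) * (((Nt : ℝ) - 𝒮.card) * ((Nsb : ℝ) - ℱ.card) * σ ^ 2) := by gcongr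
    _ = _ := by ring

theorem dominant_approximation_step_b
    {Nt Nsb : ℕ} (hNsb : 0 < Nsb)
    (σ : ℝ) (hσ : 0 < σ)
    (S : Matrix (Fin Nt) (Fin Nt) ℂ) (F : Matrix (Fin Nsb) (Fin Nsb) ℂ)
    (hS : Sᴴ * S = 1 ∧ S * Sᴴ = 1) (hF : Fᴴ * F = 1 ∧ F * Fᴴ = 1)
    (E : Matrix (Fin Nt) (Fin Nsb) ℂ)
    (W : Matrix (Fin Nt) (Fin Nsb) ℂ) (hW : W = S * E * Fᴴ)
    (𝒮 : Finset (Fin Nt)) (ℱ : Finset (Fin Nsb))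
    (hE0 : ∀ v l, ((v ∈ 𝒮 ∧ l ∉ ℱ) ∨ (v ∉ 𝒮 ∧ l ∈ ℱ)) → E v l = 0)
    (hEσ : ∀ v l, v ∉ 𝒮 → l ∉ ℱ → ‖E v l‖ ≤ σ)
    (E' : Matrix (Fin Nt) (Fin Nsb) ℂ)
    (hE' : ∀ v l, E' v l = if v ∈ 𝒮 ∧ l ∈ ℱ then E v l else 0)
    (What : Matrix (Fin Nt) (Fin Nsb) ℂ) (hWhat : What = S * E' * Fᴴ)
    (hWcol : ∀ l, colNorm W l = 1)
    (hWhatcol : ∀ l, colNorm What l ≠ 0 ∧ colNorm What l ≤ 1) :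
    1 - (1 / (Nsb : ℝ)) *
        ∑ l, ‖colInner W What l‖ / (colNorm W l * colNorm What l) ≤
      (1 / (Nsb : ℝ)) * ((Nt : ℝ) - 𝒮.card) * ((Nsb : ℝ) - ℱ.card) * σ ^ 2 :=
  dominant_approximation_step_b_general hNsb σ S F hS hF E W hW 𝒮 ℱ hE0 hEσ E' hE' What hWhat hWcol
    hWhatcol
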